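/- arXiv:1404.6192 — 2 statements merged into one kernel-verified Lean document; each statement's English description precedes it below -/
import Mathlib

section
/- Let Λ = {λ_n} be a sequence with λ_n = n·γ_n where γ_n ≥ γ_{n+1} > 0 for all n ≥ 1. If Σ_{n=1}^∞ γ_n/n < ∞, then every 2π-periodic (in each variable) function f : ℝ² → ℝ of bounded partial Λ-variation (f ∈ PΛBV) has bounded harmonic variation (f ∈ HBV), i.e. PΛBV ⊆ HBV. -/
open scoped ENNReal BigOperators
open Filter Set

noncomputable section

/-- A collection of `n` pairwise nonoverlapping subintervals of `T = [0, 2π]`,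
given as pairs of endpoints. -/
def NonoverlapIcc (n : ℕ) (I : Fin n → ℝ × ℝ) : Prop :=
  (∀ i, 0 ≤ (I i).1 ∧ (I i).1 < (I i).2 ∧ (I i).2 ≤ 2 * Real.pi) ∧
    ∀ i j, i ≠ j → (I i).2 ≤ (I j).1 ∨ (I j).2 ≤ (I i).1

/-- `f : ℝ² → ℝ` (curried) is `2π`-periodic in each variable. -/
def Periodic2 (f : ℝ → ℝ → ℝ) : Prop :=
  ∀ x y : ℝ, f (x + 2 * Real.pi) y = f x y ∧ f x (y + 2 * Real.pi) = f x y

/-- `ΛV₁(f)`: partial `Λ`-variation in the first variable. -/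
def LamV1 (Λ : ℕ → ℝ) (f : ℝ → ℝ → ℝ) : ℝ≥0∞ :=
  ⨆ (y ∈ Icc (0:ℝ) (2 * Real.pi)) (n : ℕ) (I : Fin n → ℝ × ℝ) (_ : NonoverlapIcc n I),
    ENNReal.ofReal (∑ i, |f (I i).2 y - f (I i).1 y| / Λ ((i : ℕ) + 1))

/-- `ΛV₂(f)`: partial `Λ`-variation in the second variable. -/
def LamV2 (Λ : ℕ → ℝ) (f : ℝ → ℝ → ℝ) : ℝ≥0∞ :=
  ⨆ (x ∈ Icc (0:ℝ) (2 * Real.pi)) (m : ℕ) (J : Fin m → ℝ × ℝ) (_ : NonoverlapIcc m J),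
    ENNReal.ofReal (∑ j, |f x (J j).2 - f x (J j).1| / Λ ((j : ℕ) + 1))

/-- `ΛV₁,₂(f)`: mixed `Λ`-variation. -/
def LamV12 (Λ : ℕ → ℝ) (f : ℝ → ℝ → ℝ) : ℝ≥0∞ :=
  ⨆ (n : ℕ) (m : ℕ) (I : Fin n → ℝ × ℝ) (J : Fin m → ℝ × ℝ)
    (_ : NonoverlapIcc n I) (_ : NonoverlapIcc m J),
    ENNReal.ofReal (∑ i, ∑ j,
      |f (I i).1 (J j).1 - f (I i).1 (J j).2 - f (I i).2 (J j).1 + f (I i).2 (J j).2| /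
        (Λ ((i : ℕ) + 1) * Λ ((j : ℕ) + 1)))

/-- Total harmonic variation `HV(f) = HV₁(f) + HV₂(f) + HV₁,₂(f)` (with `λ_n = n`).
`f ∈ HBV` iff `HarmonicV f ≠ ⊤`. -/
def HarmonicV (f : ℝ → ℝ → ℝ) : ℝ≥0∞ :=
  LamV1 (fun n => (n : ℝ)) f + LamV2 (fun n => (n : ℝ)) f + LamV12 (fun n => (n : ℝ)) f

/-- `Λ#V₁(f)`. -/
def LamSharpV1 (Λ : ℕ → ℝ) (f : ℝ → ℝ → ℝ) : ℝ≥0∞ :=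
  ⨆ (n : ℕ) (I : Fin n → ℝ × ℝ) (y : Fin n → ℝ)
    (_ : NonoverlapIcc n I) (_ : ∀ i, y i ∈ Icc (0:ℝ) (2 * Real.pi)),
    ENNReal.ofReal (∑ i, |f (I i).2 (y i) - f (I i).1 (y i)| / Λ ((i : ℕ) + 1))

/-- `Λ#V₂(f)`. -/
def LamSharpV2 (Λ : ℕ → ℝ) (f : ℝ → ℝ → ℝ) : ℝ≥0∞ :=
  ⨆ (m : ℕ) (J : Fin m → ℝ × ℝ) (x : Fin m → ℝ)
    (_ : NonoverlapIcc m J) (_ : ∀ j, x j ∈ Icc (0:ℝ) (2 * Real.pi)),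
    ENNReal.ofReal (∑ j, |f (x j) (J j).2 - f (x j) (J j).1| / Λ ((j : ℕ) + 1))

/-- A collection of `n` pairwise nonoverlapping rectangles `[α,β] × [γ,δ] ⊆ T²`,
encoded as `((α, β), (γ, δ))`. -/
def NonoverlapRect (n : ℕ) (A : Fin n → (ℝ × ℝ) × (ℝ × ℝ)) : Prop :=
  (∀ k, 0 ≤ (A k).1.1 ∧ (A k).1.1 < (A k).1.2 ∧ (A k).1.2 ≤ 2 * Real.pi ∧
        0 ≤ (A k).2.1 ∧ (A k).2.1 < (A k).2.2 ∧ (A k).2.2 ≤ 2 * Real.pi) ∧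
    ∀ k l, k ≠ l →
      Disjoint (Ioo (A k).1.1 (A k).1.2 ×ˢ Ioo (A k).2.1 (A k).2.2)
        (Ioo (A l).1.1 (A l).1.2 ×ˢ Ioo (A l).2.1 (A l).2.2)

/-- `Λ*V(f)` of Dyachenko–Waterman. -/
def LamStarV (Λ : ℕ → ℝ) (f : ℝ → ℝ → ℝ) : ℝ≥0∞ :=
  ⨆ (n : ℕ) (A : Fin n → (ℝ × ℝ) × (ℝ × ℝ)) (_ : NonoverlapRect n A),
    ENNReal.ofReal (∑ k,
      |f (A k).1.1 (A k).2.1 - f (A k).1.1 (A k).2.2 -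
        f (A k).1.2 (A k).2.1 + f (A k).1.2 (A k).2.2| / Λ ((k : ℕ) + 1))

/-- Partial `p`-variation (first variable); with `Φ(u) = u^p`. -/
def PV1pow (p : ℝ) (f : ℝ → ℝ → ℝ) : ℝ≥0∞ :=
  ⨆ (y ∈ Icc (0:ℝ) (2 * Real.pi)) (n : ℕ) (I : Fin n → ℝ × ℝ) (_ : NonoverlapIcc n I),
    ENNReal.ofReal (∑ i, |f (I i).2 y - f (I i).1 y| ^ p)

/-- Partial `p`-variation (second variable). -/
def PV2pow (p : ℝ) (f : ℝ → ℝ → ℝ) : ℝ≥0∞ :=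
  ⨆ (x ∈ Icc (0:ℝ) (2 * Real.pi)) (m : ℕ) (J : Fin m → ℝ × ℝ) (_ : NonoverlapIcc m J),
    ENNReal.ofReal (∑ j, |f x (J j).2 - f x (J j).1| ^ p)

/-- `V#_{Φ,1}(f)` for the class `B#V_Φ`. -/
def PhiSharpV1 (Φ : ℝ → ℝ) (f : ℝ → ℝ → ℝ) : ℝ≥0∞ :=
  ⨆ (n : ℕ) (I : Fin n → ℝ × ℝ) (y : Fin n → ℝ)
    (_ : NonoverlapIcc n I) (_ : ∀ i, y i ∈ Icc (0:ℝ) (2 * Real.pi)),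
    ENNReal.ofReal (∑ i, Φ |f (I i).2 (y i) - f (I i).1 (y i)|)

/-- `V#_{Φ,2}(f)` for the class `B#V_Φ`. -/
def PhiSharpV2 (Φ : ℝ → ℝ) (f : ℝ → ℝ → ℝ) : ℝ≥0∞ :=
  ⨆ (m : ℕ) (J : Fin m → ℝ × ℝ) (x : Fin m → ℝ)
    (_ : NonoverlapIcc m J) (_ : ∀ j, x j ∈ Icc (0:ℝ) (2 * Real.pi)),
    ENNReal.ofReal (∑ j, Φ |f (x j) (J j).2 - f (x j) (J j).1|)

/-- Partial modulus of variation `v₁(n, f)`. -/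
def modV1 (f : ℝ → ℝ → ℝ) (n : ℕ) : ℝ≥0∞ :=
  ⨆ (y ∈ Icc (0:ℝ) (2 * Real.pi)) (I : Fin n → ℝ × ℝ) (_ : NonoverlapIcc n I),
    ENNReal.ofReal (∑ i, |f (I i).2 y - f (I i).1 y|)

/-- Partial modulus of variation `v₂(m, f)`. -/
def modV2 (f : ℝ → ℝ → ℝ) (m : ℕ) : ℝ≥0∞ :=
  ⨆ (x ∈ Icc (0:ℝ) (2 * Real.pi)) (J : Fin m → ℝ × ℝ) (_ : NonoverlapIcc m J),
    ENNReal.ofReal (∑ j, |f x (J j).2 - f x (J j).1|)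

/-- `v₁#(n, f)`. -/
def modSharpV1 (f : ℝ → ℝ → ℝ) (n : ℕ) : ℝ≥0∞ :=
  ⨆ (I : Fin n → ℝ × ℝ) (y : Fin n → ℝ)
    (_ : NonoverlapIcc n I) (_ : ∀ i, y i ∈ Icc (0:ℝ) (2 * Real.pi)),
    ENNReal.ofReal (∑ i, |f (I i).2 (y i) - f (I i).1 (y i)|)

/-- `v₂#(m, f)`. -/
def modSharpV2 (f : ℝ → ℝ → ℝ) (m : ℕ) : ℝ≥0∞ :=
  ⨆ (J : Fin m → ℝ × ℝ) (x : Fin m → ℝ)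
    (_ : NonoverlapIcc m J) (_ : ∀ j, x j ∈ Icc (0:ℝ) (2 * Real.pi)),
    ENNReal.ofReal (∑ j, |f (x j) (J j).2 - f (x j) (J j).1|)

/-- The shifted sequence `Λ_n = {λ_k}_{k=n}^∞`: its `i`-th member (`i ≥ 1`) is `λ_{n+i-1}`. -/
def ShiftSeq (Λ : ℕ → ℝ) (n : ℕ) : ℕ → ℝ := fun k => Λ (k + n - 1)

/-- The sequence `λ_n = n / log n` (for `n ≥ 2`; the value at `n ≤ 1` is irrelevant). -/
def nlogSeq : ℕ → ℝ := fun n => if n ≤ 1 then 1 else (n : ℝ) / Real.log n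

/-- Double Fourier coefficient
`f̂(m,n) = (1/(4π²)) ∫₀^{2π}∫₀^{2π} f(x,y) e^{-imx} e^{-iny} dx dy`. -/
def fCoef (f : ℝ → ℝ → ℝ) (m n : ℤ) : ℂ :=
  (4 * (Real.pi : ℂ) ^ 2)⁻¹ *
    ∫ x in (0:ℝ)..(2 * Real.pi), ∫ y in (0:ℝ)..(2 * Real.pi),
      (f x y : ℂ) * Complex.exp (-(Complex.I * (m : ℂ) * (x : ℂ))) *
        Complex.exp (-(Complex.I * (n : ℂ) * (y : ℂ)))

/-- Rectangular partial sum `S_{M,N}[f,(x,y)]` of the double Fourier series. -/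
def SRect (f : ℝ → ℝ → ℝ) (M N : ℕ) (x y : ℝ) : ℂ :=
  ∑ m ∈ Finset.Icc (-(M : ℤ)) (M : ℤ), ∑ n ∈ Finset.Icc (-(N : ℤ)) (N : ℤ),
    fCoef f m n * Complex.exp (Complex.I * (m : ℂ) * (x : ℂ)) *
      Complex.exp (Complex.I * (n : ℂ) * (y : ℂ))

/-- One-sided punctured neighborhood filter: from the right if `s = true`,
from the left if `s = false`. -/
def sideF (x : ℝ) (s : Bool) : Filter ℝ :=
  if s then nhdsWithin x (Ioi x) else nhdsWithin x (Iio x)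

/-- `HasQuadLim f x y s t L` means the open-quadrant limit of `f` at `(x,y)` from the
quadrant with horizontal direction `s` and vertical direction `t` exists and equals `L`
(e.g. `s = true, t = false` is `f(x+0, y-0)`). -/
def HasQuadLim (f : ℝ → ℝ → ℝ) (x y : ℝ) (s t : Bool) (L : ℝ) : Prop :=
  Tendsto (fun p : ℝ × ℝ => f p.1 p.2) ((sideF x s) ×ˢ (sideF y t)) (nhds L)

/-- Cesàro numbers `A_k^α = (α+1)(α+2)⋯(α+k)/k!`. -/
def AA (α : ℝ) : ℕ → ℝ
  | 0 => 1
  | k + 1 => AA α k * (α + ((k : ℝ) + 1)) / ((k : ℝ) + 1)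

/-- Cesàro `(C; α, β)` means of the double Fourier series of `f`. -/
def cesaro (f : ℝ → ℝ → ℝ) (α β : ℝ) (n m : ℕ) (x y : ℝ) : ℂ :=
  ((1 / (AA α n * AA β m) : ℝ) : ℂ) *
    ∑ i ∈ Finset.range (n + 1), ∑ j ∈ Finset.range (m + 1),
      ((AA (α - 1) (n - i) * AA (β - 1) (m - j) : ℝ) : ℂ) * SRect f i j x y

end

/-! Since `λ_n = n γ_n ≤ γ_1 n`, the harmonic partial variations are at most `γ_1` times the
`Λ`-ones. For the mixed variation put `c_ij = |f(I_i, J_j)|`. As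
`|f(I, J)| ≤ |f(a, J)| + |f(b, J)|`, every row and column of `(c_ij)` has `Λ`-variation at most
`2 PΛV(f)`, so its `k`-th largest entry is at most `2 PΛV(f) / G(k)` with `G(k) = Σ_{t ≤ k} 1/λ_t`.
Split `Σ c_ij / (i j)` along the diagonal; in the part `j = i + t ≥ i`, rearranging each row
against the decreasing weights `1 / (i (i + t))` and summing over `i` leaves
`Σ_t (log t / t) / G(t)`. This series converges by Cauchy condensation, because
`G(2^s) ≥ s / (4 γ(2^⌊s/2⌋))` and `Σ_k γ(2^k) < ∞` is the condensed form of `Σ γ_n / n < ∞`. -/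

open Finset

noncomputable def logDivSucc (t : ℕ) : ℝ := (1 + Real.log (t + 1)) / (t + 1)

theorem logDivSucc_nonneg (t : ℕ) : 0 ≤ logDivSucc t := by
  have : 0 ≤ Real.log ((t : ℝ) + 1) := Real.log_nonneg (by linarith [t.cast_nonneg (α := ℝ)])
  unfold logDivSucc
  positivity

theorem antitone_logDivSucc : Antitone logDivSucc := by
  intro s t hst
  have hs : (1 : ℝ) ≤ s + 1 := by linarith [s.cast_nonneg (α := ℝ)]
  have hst' : (s : ℝ) + 1 ≤ t + 1 := by exact_mod_cast Nat.add_le_add_right hst 1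
  have hlog : Real.log ((t : ℝ) + 1) - Real.log (s + 1) ≤ (t + 1) / (s + 1) - 1 := by
    rw [← Real.log_div (by linarith) (by linarith)]
    exact Real.log_le_sub_one_of_pos (by positivity)
  have hlog_s : 0 ≤ Real.log ((s : ℝ) + 1) := Real.log_nonneg hs
  have hmul : ((s : ℝ) + 1) * ((t + 1) / (s + 1)) = t + 1 := by field_simp
  unfold logDivSucc
  rw [div_le_div_iff₀ (by linarith) (by linarith)]
  nlinarith [mul_le_mul_of_nonneg_left hlog (by linarith : (0 : ℝ) ≤ s + 1),
    mul_nonneg (sub_nonneg.2 hst') hlog_s]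

theorem sum_range_sub_add_le {a : ℕ → ℝ} (ha : ∀ i, 0 ≤ a i) (n s : ℕ) :
    ∑ i ∈ range n, (a i - a (s + i)) ≤ ∑ i ∈ range s, a i := by
  have hsplit := sum_range_add a s n
  have hmono : ∑ i ∈ range n, a i ≤ ∑ i ∈ range (s + n), a i :=
    sum_le_sum_of_subset_of_nonneg (range_subset_range.2 (by omega)) fun i _ _ => ha i
  rw [sum_sub_distrib]
  linarith

theorem sum_range_one_div_mul_le (n t : ℕ) :
    ∑ i ∈ range n, 1 / (((i : ℝ) + 1) * (i + t + 1)) ≤ 2 * logDivSucc t := by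
  set a : ℕ → ℝ := fun i => 1 / ((i : ℝ) + 1)
  -- `1 / (i + 1) - 1 / (i + t + 2) = (t + 1) / ((i + 1) (i + t + 2))` telescopes
  have hterm : ∀ i : ℕ, 1 / (((i : ℝ) + 1) * (i + t + 1)) ≤
      2 / ((t : ℝ) + 1) * (a i - a (t + 1 + i)) := by
    intro i
    simp only [a]
    push_cast
    rw [div_sub_div _ _ (by positivity) (by positivity), div_mul_div_comm,
      div_le_div_iff₀ (by positivity) (by positivity)]
    have : 0 ≤ ((t : ℝ) + 1) * ((i : ℝ) + 1) * ((i : ℝ) + t) := by positivity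
    linarith
  have hharm : ∑ i ∈ range (t + 1), a i ≤ 1 + Real.log ((t : ℝ) + 1) := by
    have := harmonic_le_one_add_log (t + 1)
    simp only [harmonic, Rat.cast_sum, Rat.cast_inv, Rat.cast_natCast] at this
    push_cast at this
    simpa [a] using this
  calc ∑ i ∈ range n, 1 / (((i : ℝ) + 1) * (i + t + 1))
      ≤ 2 / ((t : ℝ) + 1) * ∑ i ∈ range n, (a i - a (t + 1 + i)) := by
        rw [mul_sum]; exact sum_le_sum fun i _ => hterm i
    _ ≤ 2 / ((t : ℝ) + 1) * (1 + Real.log ((t : ℝ) + 1)) := by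
        gcongr
        exact (sum_range_sub_add_le (fun i => by positivity) n (t + 1)).trans hharm
    _ = 2 * logDivSucc t := by unfold logDivSucc; ring

noncomputable def invPartialSum (Λ : ℕ → ℝ) (k : ℕ) : ℝ := ∑ t ∈ range k, 1 / Λ (t + 1)

theorem invPartialSum_pos {Λ : ℕ → ℝ} (hΛ : ∀ k, 0 < Λ (k + 1)) {k : ℕ} (hk : 0 < k) :
    0 < invPartialSum Λ k :=
  sum_pos (fun t _ => one_div_pos.2 (hΛ t)) (nonempty_range_iff.2 hk.ne')

theorem monotone_invPartialSum {Λ : ℕ → ℝ} (hΛ : ∀ k, 0 < Λ (k + 1)) :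
    Monotone (invPartialSum Λ) := fun _ _ hkl =>
  sum_le_sum_of_subset_of_nonneg (range_subset_range.2 hkl) fun t _ _ =>
    (one_div_pos.2 (hΛ t)).le

section Gamma

variable {γ : ℕ → ℝ}

theorem natCast_mul_gamma_succ_pos (hpos : ∀ n, 0 < γ (n + 1)) (k : ℕ) :
    0 < (fun n : ℕ => (n : ℝ) * γ n) (k + 1) :=
  mul_pos (by positivity) (hpos k)

theorem gamma_two_pow_pos (hpos : ∀ n, 0 < γ (n + 1)) (r : ℕ) : 0 < γ (2 ^ r) := by
  simpa [Nat.sub_add_cancel Nat.one_le_two_pow] using hpos (2 ^ r - 1)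

theorem invPartialSum_add_le_two_mul (hpos : ∀ n, 0 < γ (n + 1))
    (hanti : AntitoneOn γ (Set.Ici 1)) {k : ℕ} (hk : 1 ≤ k) :
    invPartialSum (fun n => (n : ℝ) * γ n) k + 1 / (2 * γ (k + 1)) ≤
      invPartialSum (fun n => (n : ℝ) * γ n) (2 * k) := by
  have hterm : ∀ x ∈ range k,
      1 / (2 * k * γ (k + 1)) ≤ 1 / (((k + x + 1 : ℕ) : ℝ) * γ (k + x + 1)) := by
    intro x hx
    have hx : x < k := Finset.mem_range.1 hx
    have hγ : γ (k + x + 1) ≤ γ (k + 1) := hanti (by simp) (by simp) (by omega)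
    have hle : ((k + x + 1 : ℕ) : ℝ) ≤ 2 * k := by exact_mod_cast (by omega : k + x + 1 ≤ 2 * k)
    have := hpos (k + x)
    gcongr
  have hk' : (k : ℝ) ≠ 0 := by exact_mod_cast (by omega : k ≠ 0)
  have hsum := sum_le_sum hterm
  rw [sum_const, card_range, nsmul_eq_mul,
    show (k : ℝ) * (1 / (2 * k * γ (k + 1))) = 1 / (2 * γ (k + 1)) by field_simp] at hsum
  rw [invPartialSum, invPartialSum, two_mul k, sum_range_add]
  exact add_le_add_right hsum _

theorem half_sum_inv_le_invPartialSum (hpos : ∀ n, 0 < γ (n + 1))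
    (hanti : AntitoneOn γ (Set.Ici 1)) (s : ℕ) :
    1 / 2 * ∑ r ∈ range s, 1 / γ (2 ^ r + 1) ≤
      invPartialSum (fun n => (n : ℝ) * γ n) (2 ^ s) := by
  induction s with
  | zero => simpa using (invPartialSum_pos (natCast_mul_gamma_succ_pos hpos) one_pos).le
  | succ s ih =>
    have := invPartialSum_add_le_two_mul hpos hanti (Nat.one_le_two_pow (n := s))
    rw [← pow_succ'] at this
    rw [sum_range_succ, mul_add, one_div_mul_one_div]
    linarith

theorem mul_inv_gamma_le_invPartialSum (hpos : ∀ n, 0 < γ (n + 1))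
    (hanti : AntitoneOn γ (Set.Ici 1)) (s : ℕ) :
    s * (1 / γ (2 ^ (s / 2))) ≤ 4 * invPartialSum (fun n => (n : ℝ) * γ n) (2 ^ s) := by
  have hterm : ∀ r ∈ Finset.Ico (s / 2) s, 1 / γ (2 ^ (s / 2)) ≤ 1 / γ (2 ^ r + 1) := by
    intro r hr
    have := hpos (2 ^ r)
    gcongr
    exact hanti (by simp [Nat.one_le_two_pow]) (by simp)
      (le_add_right (Nat.pow_le_pow_right two_pos (Finset.mem_Ico.1 hr).1))
  have hsub : ∑ r ∈ Finset.Ico (s / 2) s, 1 / γ (2 ^ r + 1) ≤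
      ∑ r ∈ range s, 1 / γ (2 ^ r + 1) :=
    sum_le_sum_of_subset_of_nonneg
      (range_eq_Ico s ▸ Finset.Ico_subset_Ico_left (Nat.zero_le _))
      fun r _ _ => (one_div_pos.2 (hpos _)).le
  have hcard : (s : ℝ) ≤ 2 * ((s - s / 2 : ℕ) : ℝ) := by exact_mod_cast (by omega)
  have hlow := sum_le_sum hterm
  rw [sum_const, Nat.card_Ico, nsmul_eq_mul] at hlow
  have hhalf := half_sum_inv_le_invPartialSum hpos hanti s
  have := mul_le_mul_of_nonneg_right hcard (one_div_pos.2 (gamma_two_pow_pos hpos (s / 2))).le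
  linarith

theorem summable_gamma_two_pow_half (hpos : ∀ n, 0 < γ (n + 1))
    (hanti : AntitoneOn γ (Set.Ici 1)) (hsum : Summable fun n : ℕ => γ (n + 1) / ((n : ℝ) + 1)) :
    Summable fun s : ℕ => γ (2 ^ (s / 2)) := by
  have hnonneg : ∀ n : ℕ, 0 ≤ γ n / n := by
    rintro (_ | n)
    · simp
    · exact div_nonneg (hpos n).le n.succ.cast_nonneg
  have hmono : ∀ ⦃m n : ℕ⦄, 0 < m → m ≤ n → γ n / n ≤ γ m / m := fun m n hm hmn => by
    obtain ⟨m, rfl⟩ := Nat.exists_eq_succ_of_ne_zero hm.ne'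
    exact div_le_div₀ (hpos m).le
      (hanti (Set.mem_Ici.2 hm) (Set.mem_Ici.2 (hm.trans_le hmn)) hmn)
      (by positivity) (by exact_mod_cast hmn)
  have hcond : Summable fun k : ℕ => γ (2 ^ k) := by
    refine ((summable_condensed_iff_of_nonneg hnonneg hmono).2
      ((summable_nat_add_iff 1).1 (by simpa using hsum))).congr fun k => ?_
    push_cast
    field_simp
  refine Summable.even_add_odd ?_ ?_
  · simpa using hcond
  · simpa [Nat.mul_add_div two_pos] using hcond

theorem two_pow_mul_logDivSucc_le (s : ℕ) : 2 ^ s * logDivSucc (2 ^ s) ≤ s + 2 := by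
  have hpow : (1 : ℝ) ≤ 2 ^ s := one_le_pow₀ one_le_two
  have hlog2 : Real.log 2 ≤ 1 := by
    linarith [Real.log_le_sub_one_of_pos (show (0 : ℝ) < 2 by norm_num)]
  have hlog : Real.log ((2 : ℝ) ^ s + 1) ≤ (s + 1) * Real.log 2 := by
    rw [show ((s : ℝ) + 1) * Real.log 2 = Real.log (2 ^ (s + 1)) by
      rw [Real.log_pow]; push_cast; ring]
    exact Real.log_le_log (by positivity) (by rw [pow_succ]; linarith)
  have hlog_nonneg : 0 ≤ 1 + Real.log ((2 : ℝ) ^ s + 1) := by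
    linarith [Real.log_nonneg (show (1 : ℝ) ≤ 2 ^ s + 1 by linarith)]
  unfold logDivSucc
  push_cast
  calc (2 : ℝ) ^ s * ((1 + Real.log (2 ^ s + 1)) / (2 ^ s + 1)) ≤ 1 + Real.log (2 ^ s + 1) := by
        rw [mul_div_assoc', div_le_iff₀ (by positivity)]
        nlinarith
    _ ≤ s + 2 := by nlinarith [(s.cast_nonneg : (0 : ℝ) ≤ s)]

theorem two_pow_mul_logDivSucc_div_le (hpos : ∀ n, 0 < γ (n + 1))
    (hanti : AntitoneOn γ (Set.Ici 1)) {s : ℕ} (hs : 1 ≤ s) :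
    2 ^ s * (logDivSucc (2 ^ s) / invPartialSum (fun n => (n : ℝ) * γ n) (2 ^ s + 1)) ≤
      12 * γ (2 ^ (s / 2)) := by
  set G := invPartialSum (fun n => (n : ℝ) * γ n)
  have hGs : 0 < G (2 ^ s) :=
    invPartialSum_pos (natCast_mul_gamma_succ_pos hpos) (Nat.two_pow_pos s)
  have hγs := gamma_two_pow_pos hpos (s / 2)
  have hlow := mul_inv_gamma_le_invPartialSum hpos hanti s
  rw [mul_one_div, div_le_iff₀ hγs] at hlow
  have hsR : (1 : ℝ) ≤ s := by exact_mod_cast hs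
  calc (2 : ℝ) ^ s * (logDivSucc (2 ^ s) / G (2 ^ s + 1))
      ≤ 2 ^ s * logDivSucc (2 ^ s) / G (2 ^ s) := by
        rw [mul_div_assoc]
        gcongr
        · exact logDivSucc_nonneg _
        · exact monotone_invPartialSum (natCast_mul_gamma_succ_pos hpos) (Nat.le_succ _)
    _ ≤ (s + 2) / G (2 ^ s) := by gcongr; exact two_pow_mul_logDivSucc_le s
    _ ≤ 12 * γ (2 ^ (s / 2)) := by
        rw [div_le_iff₀ hGs]
        nlinarith

theorem summable_logDivSucc_div_invPartialSum (hpos : ∀ n, 0 < γ (n + 1))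
    (hanti : AntitoneOn γ (Set.Ici 1)) (hsum : Summable fun n : ℕ => γ (n + 1) / ((n : ℝ) + 1)) :
    Summable fun t => logDivSucc t / invPartialSum (fun n => (n : ℝ) * γ n) (t + 1) := by
  have hΛ := natCast_mul_gamma_succ_pos hpos
  have hG : ∀ t, 0 < invPartialSum (fun n => (n : ℝ) * γ n) (t + 1) := fun t =>
    invPartialSum_pos hΛ t.succ_pos
  rw [← summable_condensed_iff_of_nonneg (fun t => div_nonneg (logDivSucc_nonneg t) (hG t).le)
    fun m n _ hmn => div_le_div₀ (logDivSucc_nonneg m) (antitone_logDivSucc hmn) (hG m)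
      (monotone_invPartialSum hΛ (Nat.succ_le_succ hmn))]
  refine Summable.of_norm_bounded_eventually_nat
    ((summable_gamma_two_pow_half hpos hanti hsum).mul_left 12) ?_
  filter_upwards [Filter.eventually_ge_atTop 1] with s hs
  rw [Real.norm_of_nonneg (mul_nonneg (by positivity)
    (div_nonneg (logDivSucc_nonneg _) (hG _).le))]
  exact two_pow_mul_logDivSucc_div_le hpos hanti hs

end Gamma

theorem sum_mul_le_sum_div_invPartialSum {Λ : ℕ → ℝ} (hΛ : ∀ k, 0 < Λ (k + 1)) {K : ℕ}
    (d w : Fin K → ℝ) (hw : Antitone w) (hw0 : ∀ t, 0 ≤ w t) {W : ℝ}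
    (hd : ∀ k (e : Fin k → Fin K), Function.Injective e → ∑ t, d (e t) / Λ (t + 1) ≤ W) :
    ∑ t, d t * w t ≤ ∑ t : Fin K, W / invPartialSum Λ (t + 1) * w t := by
  set τ : Equiv.Perm (Fin K) := Fin.revPerm.trans (Tuple.sort d)
  have hτ : Antitone (d ∘ τ) := fun s t hst => Tuple.monotone_sort d (Fin.rev_le_rev.2 hst)
  -- the `t + 1` largest values of `d` are all at least `d (τ t)`
  have hkey : ∀ t : Fin K, d (τ t) * invPartialSum Λ (t + 1) ≤ W := by
    intro t
    calc d (τ t) * invPartialSum Λ (t + 1) = ∑ s : Fin (t + 1), d (τ t) / Λ (s + 1) := by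
          rw [invPartialSum, ← Fin.sum_univ_eq_sum_range (fun s => 1 / Λ (s + 1)), mul_sum]
          simp only [mul_one_div]
      _ ≤ ∑ s : Fin (t + 1), d (τ (Fin.castLE t.isLt s)) / Λ (s + 1) := by
          gcongr with s
          · exact (hΛ s).le
          · exact hτ (Fin.mk_le_mk.2 (Nat.lt_succ_iff.1 s.isLt))
      _ ≤ W := hd _ _ (τ.injective.comp (Fin.castLE_injective _))
  calc ∑ t, d t * w t = ∑ t, d (τ t) * w (τ t) := (Equiv.sum_comp τ _).symm
    _ ≤ ∑ t, d (τ t) * w t :=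
        Monovary.sum_mul_comp_perm_le_sum_mul fun _ _ hij => hτ (hw.reflect_lt hij).le
    _ ≤ _ := sum_le_sum fun t _ => mul_le_mul_of_nonneg_right
        ((le_div_iff₀ (invPartialSum_pos hΛ t.succ_pos)).2 (hkey t)) (hw0 t)

theorem sum_Ico_div_le {Λ : ℕ → ℝ} (hΛ : ∀ k, 0 < Λ (k + 1)) (r : ℕ → ℝ) {i m : ℕ} {W : ℝ}
    (hW : 0 ≤ W) (hr : ∀ k (e : Fin k → ℕ), Function.Injective e → (∀ t, e t < m) →
      ∑ t, r (e t) / Λ (t + 1) ≤ W) :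
    ∑ j ∈ Ico i m, r j / (((i : ℝ) + 1) * (j + 1)) ≤
      ∑ t ∈ range m, W / invPartialSum Λ (t + 1) * (1 / (((i : ℝ) + 1) * (i + t + 1))) := by
  set w : ℕ → ℝ := fun t => 1 / (((i : ℝ) + 1) * (i + t + 1))
  have hw : Antitone w := fun s t hst => by simp only [w]; gcongr
  calc ∑ j ∈ Ico i m, r j / (((i : ℝ) + 1) * (j + 1))
      = ∑ t : Fin (m - i), r (i + t) * w t := by
        rw [sum_Ico_eq_sum_range, ← Fin.sum_univ_eq_sum_range]
        push_cast
        simp only [w, mul_one_div, add_assoc]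
    _ ≤ ∑ t : Fin (m - i), W / invPartialSum Λ (t + 1) * w t :=
        sum_mul_le_sum_div_invPartialSum hΛ _ _ (fun s t hst => hw hst) (fun t => by positivity)
          fun k e he => hr k (fun s => i + e s) (fun s t hst => he (Fin.ext (by simpa using hst)))
            fun s => by have := (e s).isLt; omega
    _ ≤ _ := by
        rw [Fin.sum_univ_eq_sum_range (fun t => W / invPartialSum Λ (t + 1) * w t) (m - i)]
        exact sum_le_sum_of_subset_of_nonneg (range_subset_range.2 (Nat.sub_le _ _))
          fun t _ _ => by have := invPartialSum_pos hΛ t.succ_pos; positivity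

theorem sum_range_sum_Ico_div_le {Λ : ℕ → ℝ} (hΛ : ∀ k, 0 < Λ (k + 1)) (c : ℕ → ℕ → ℝ)
    {n m : ℕ} {W : ℝ} (hW : 0 ≤ W)
    (hrow : ∀ i < n, ∀ k (e : Fin k → ℕ), Function.Injective e → (∀ t, e t < m) →
      ∑ t, c i (e t) / Λ (t + 1) ≤ W) :
    ∑ i ∈ range n, ∑ j ∈ Ico i m, c i j / (((i : ℝ) + 1) * (j + 1)) ≤
      2 * W * ∑ t ∈ range m, logDivSucc t / invPartialSum Λ (t + 1) := by
  calc ∑ i ∈ range n, ∑ j ∈ Ico i m, c i j / (((i : ℝ) + 1) * (j + 1))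
      ≤ ∑ i ∈ range n, ∑ t ∈ range m,
          W / invPartialSum Λ (t + 1) * (1 / (((i : ℝ) + 1) * (i + t + 1))) :=
        sum_le_sum fun i hi => sum_Ico_div_le hΛ (c i) hW (hrow i (Finset.mem_range.1 hi))
    _ = ∑ t ∈ range m, W / invPartialSum Λ (t + 1) *
          ∑ i ∈ range n, 1 / (((i : ℝ) + 1) * (i + t + 1)) := by
        rw [sum_comm]; simp only [mul_sum]
    _ ≤ ∑ t ∈ range m, W / invPartialSum Λ (t + 1) * (2 * logDivSucc t) := by
        gcongr with t
        · have := invPartialSum_pos hΛ t.succ_pos; positivity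
        · exact sum_range_one_div_mul_le n t
    _ = 2 * W * ∑ t ∈ range m, logDivSucc t / invPartialSum Λ (t + 1) := by
        rw [mul_sum]; exact sum_congr rfl fun t _ => by ring

theorem sum_range_sum_range_le_add {g : ℕ → ℕ → ℝ} (hg : ∀ i j, 0 ≤ g i j) (n m : ℕ) :
    ∑ i ∈ range n, ∑ j ∈ range m, g i j ≤
      ∑ i ∈ range n, ∑ j ∈ Ico i m, g i j + ∑ j ∈ range m, ∑ i ∈ Ico j n, g i j := by
  have hsplit : ∀ i, ∑ j ∈ range m, g i j =
      ∑ j ∈ Ico i m, g i j + ∑ j ∈ range m with j < i, g i j := by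
    intro i
    rw [← sum_filter_add_sum_filter_not (range m) (fun j => i ≤ j)]
    congr 1
    · congr 1; ext j; simp only [mem_filter, Finset.mem_range, Finset.mem_Ico]; omega
    · congr 1; ext j; simp only [mem_filter, Finset.mem_range, not_le]
  have hswap : ∑ i ∈ range n, ∑ j ∈ range m with j < i, g i j =
      ∑ j ∈ range m, ∑ i ∈ range n with j < i, g i j :=
    sum_comm' fun i j => by simp only [mem_filter, Finset.mem_range]; tauto
  rw [sum_congr rfl fun i _ => hsplit i, sum_add_distrib, hswap]
  exact add_le_add le_rfl <| sum_le_sum fun j _ => sum_le_sum_of_subset_of_nonneg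
    (fun i => by simp only [mem_filter, Finset.mem_range, Finset.mem_Ico]; omega)
    fun i _ _ => hg i j

theorem sum_range_sum_range_div_le {Λ : ℕ → ℝ} (hΛ : ∀ k, 0 < Λ (k + 1)) (c : ℕ → ℕ → ℝ)
    (hc : ∀ i j, 0 ≤ c i j) {n m : ℕ} {W W' : ℝ} (hW : 0 ≤ W) (hW' : 0 ≤ W')
    (hrow : ∀ i < n, ∀ k (e : Fin k → ℕ), Function.Injective e → (∀ t, e t < m) →
      ∑ t, c i (e t) / Λ (t + 1) ≤ W)
    (hcol : ∀ j < m, ∀ k (e : Fin k → ℕ), Function.Injective e → (∀ t, e t < n) →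
      ∑ t, c (e t) j / Λ (t + 1) ≤ W')
    (hs : Summable fun t => logDivSucc t / invPartialSum Λ (t + 1)) :
    ∑ i ∈ range n, ∑ j ∈ range m, c i j / (((i : ℝ) + 1) * (j + 1)) ≤
      2 * (W + W') * ∑' t, logDivSucc t / invPartialSum Λ (t + 1) := by
  have hle_tsum : ∀ k, ∑ t ∈ range k, logDivSucc t / invPartialSum Λ (t + 1) ≤
      ∑' t, logDivSucc t / invPartialSum Λ (t + 1) := fun k =>
    hs.sum_le_tsum _ fun t _ =>
      div_nonneg (logDivSucc_nonneg t) (invPartialSum_pos hΛ t.succ_pos).le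
  have hcol_half : ∑ j ∈ range m, ∑ i ∈ Ico j n, c i j / (((i : ℝ) + 1) * (j + 1)) ≤
      2 * W' * ∑ t ∈ range n, logDivSucc t / invPartialSum Λ (t + 1) :=
    (sum_congr rfl fun j _ => sum_congr rfl fun i _ => by rw [mul_comm]).trans_le
      (sum_range_sum_Ico_div_le hΛ (fun j i => c i j) hW' hcol)
  calc _ ≤ _ := sum_range_sum_range_le_add (fun i j => div_nonneg (hc i j) (by positivity)) n m
    _ ≤ _ := add_le_add (sum_range_sum_Ico_div_le hΛ c hW hrow) hcol_half
    _ ≤ 2 * W * ∑' t, logDivSucc t / invPartialSum Λ (t + 1) +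
          2 * W' * ∑' t, logDivSucc t / invPartialSum Λ (t + 1) := by
        gcongr <;> exact hle_tsum _
    _ = _ := by ring

theorem NonoverlapIcc.comp_injective {n k : ℕ} {I : Fin n → ℝ × ℝ} (hI : NonoverlapIcc n I)
    {e : Fin k → Fin n} (he : Function.Injective e) : NonoverlapIcc k (I ∘ e) :=
  ⟨fun t => hI.1 (e t), fun s t hst => hI.2 (e s) (e t) (he.ne hst)⟩

theorem NonoverlapIcc.fst_mem {n : ℕ} {I : Fin n → ℝ × ℝ} (hI : NonoverlapIcc n I) (i : Fin n) :
    (I i).1 ∈ Set.Icc 0 (2 * Real.pi) :=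
  ⟨(hI.1 i).1, (hI.1 i).2.1.le.trans (hI.1 i).2.2⟩

theorem NonoverlapIcc.snd_mem {n : ℕ} {I : Fin n → ℝ × ℝ} (hI : NonoverlapIcc n I) (i : Fin n) :
    (I i).2 ∈ Set.Icc 0 (2 * Real.pi) :=
  ⟨(hI.1 i).1.trans (hI.1 i).2.1.le, (hI.1 i).2.2⟩

-- the paper's `f(I, J)`
def rectDiff (f : ℝ → ℝ → ℝ) (I J : ℝ × ℝ) : ℝ := f I.1 J.1 - f I.1 J.2 - f I.2 J.1 + f I.2 J.2

theorem rectDiff_flip (f : ℝ → ℝ → ℝ) (I J : ℝ × ℝ) : rectDiff (flip f) J I = rectDiff f I J := by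
  simp only [rectDiff, flip]; ring

theorem div_le_mul_div_of_le {Λ Λ' : ℕ → ℝ} (hΛ : ∀ k, 0 < Λ (k + 1))
    (hΛ' : ∀ k, 0 < Λ' (k + 1)) {C : ℝ} (hC : ∀ k, Λ (k + 1) ≤ C * Λ' (k + 1))
    {a : ℝ} (ha : 0 ≤ a) (k : ℕ) : a / Λ' (k + 1) ≤ C * (a / Λ (k + 1)) := by
  rw [mul_div_assoc', div_le_div_iff₀ (hΛ' k) (hΛ k)]
  nlinarith [mul_le_mul_of_nonneg_left (hC k) ha]

section Variation

variable {Λ : ℕ → ℝ} {f : ℝ → ℝ → ℝ}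

theorem ofReal_sum_div_le_LamV1 {y : ℝ} (hy : y ∈ Set.Icc 0 (2 * Real.pi)) {n : ℕ}
    {I : Fin n → ℝ × ℝ} (hI : NonoverlapIcc n I) :
    ENNReal.ofReal (∑ i, |f (I i).2 y - f (I i).1 y| / Λ (i + 1)) ≤ LamV1 Λ f :=
  le_iSup₂_of_le y hy <| le_iSup₂_of_le n I <| le_iSup_of_le hI le_rfl

theorem LamV2_eq_LamV1_flip : LamV2 Λ f = LamV1 Λ (flip f) := rfl

theorem LamV1_le_ofReal_mul {Λ' : ℕ → ℝ} (hΛ : ∀ k, 0 < Λ (k + 1)) (hΛ' : ∀ k, 0 < Λ' (k + 1))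
    {C : ℝ} (hC : ∀ k, Λ (k + 1) ≤ C * Λ' (k + 1)) :
    LamV1 Λ' f ≤ ENNReal.ofReal C * LamV1 Λ f := by
  have hC0 : 0 ≤ C := (pos_of_mul_pos_left ((hΛ 0).trans_le (hC 0)) (hΛ' 0).le).le
  refine iSup₂_le fun y hy => iSup₂_le fun n I => iSup_le fun hI => ?_
  calc ENNReal.ofReal (∑ i, |f (I i).2 y - f (I i).1 y| / Λ' (i + 1))
      ≤ ENNReal.ofReal (C * ∑ i, |f (I i).2 y - f (I i).1 y| / Λ (i + 1)) := by
        rw [mul_sum]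
        exact ENNReal.ofReal_le_ofReal <| sum_le_sum fun i _ =>
          div_le_mul_div_of_le hΛ hΛ' hC (abs_nonneg _) i
    _ ≤ ENNReal.ofReal C * LamV1 Λ f := by
        rw [ENNReal.ofReal_mul hC0]
        gcongr; exact ofReal_sum_div_le_LamV1 hy hI

theorem sum_abs_rectDiff_div_le_LamV1 (hΛ : ∀ k, 0 < Λ (k + 1)) (hf : LamV1 Λ f ≠ ⊤)
    {J : ℝ × ℝ} (hJ₁ : J.1 ∈ Set.Icc 0 (2 * Real.pi)) (hJ₂ : J.2 ∈ Set.Icc 0 (2 * Real.pi))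
    {k : ℕ} {I : Fin k → ℝ × ℝ} (hI : NonoverlapIcc k I) :
    ∑ t, |rectDiff f (I t) J| / Λ (t + 1) ≤ 2 * (LamV1 Λ f).toReal := by
  have hterm : ∀ t, |rectDiff f (I t) J| / Λ (t + 1) ≤
      |f (I t).2 J.1 - f (I t).1 J.1| / Λ (t + 1) +
        |f (I t).2 J.2 - f (I t).1 J.2| / Λ (t + 1) := by
    intro t
    rw [← add_div]
    gcongr
    · exact (hΛ t).le
    · calc _ = |(f (I t).2 J.2 - f (I t).1 J.2) - (f (I t).2 J.1 - f (I t).1 J.1)| := by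
            rw [rectDiff]; ring_nf
        _ ≤ _ := (abs_sub _ _).trans_eq (add_comm _ _)
  have hV : ∀ y ∈ Set.Icc 0 (2 * Real.pi),
      ∑ t, |f (I t).2 y - f (I t).1 y| / Λ (t + 1) ≤ (LamV1 Λ f).toReal := fun y hy =>
    (ENNReal.ofReal_le_iff_le_toReal hf).1 (ofReal_sum_div_le_LamV1 hy hI)
  calc _ ≤ _ := sum_le_sum fun t _ => hterm t
    _ ≤ (LamV1 Λ f).toReal + (LamV1 Λ f).toReal := by
        rw [sum_add_distrib]; exact add_le_add (hV _ hJ₁) (hV _ hJ₂)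
    _ = _ := by ring

theorem LamV12_natCast_ne_top (hΛ : ∀ k, 0 < Λ (k + 1))
    (hs : Summable fun t => logDivSucc t / invPartialSum Λ (t + 1))
    (h₁ : LamV1 Λ f ≠ ⊤) (h₂ : LamV2 Λ f ≠ ⊤) :
    LamV12 (fun n => (n : ℝ)) f ≠ ⊤ := by
  set A := (LamV1 Λ f).toReal
  set B := (LamV2 Λ f).toReal
  refine ne_top_of_le_ne_top (b := ENNReal.ofReal
    (2 * (2 * B + 2 * A) * ∑' t, logDivSucc t / invPartialSum Λ (t + 1))) ENNReal.ofReal_ne_top ?_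
  refine iSup₂_le fun n m => iSup₂_le fun I J => iSup₂_le fun hI hJ => ENNReal.ofReal_le_ofReal ?_
  set c : ℕ → ℕ → ℝ := fun i j =>
    if h : i < n ∧ j < m then |rectDiff f (I ⟨i, h.1⟩) (J ⟨j, h.2⟩)| else 0
  have hc : ∀ i j, 0 ≤ c i j := fun i j => by simp only [c]; split_ifs <;> simp
  have hsum : ∑ i : Fin n, ∑ j : Fin m, |rectDiff f (I i) (J j)| /
      ((((i : ℕ) + 1 : ℕ) : ℝ) * (((j : ℕ) + 1 : ℕ) : ℝ)) =
      ∑ i ∈ range n, ∑ j ∈ range m, c i j / (((i : ℝ) + 1) * (j + 1)) := by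
    rw [← Fin.sum_univ_eq_sum_range (fun i => ∑ j ∈ range m, c i j / (((i : ℝ) + 1) * (j + 1)))]
    refine sum_congr rfl fun i _ => ?_
    rw [← Fin.sum_univ_eq_sum_range (fun j => c i j / (((i : ℝ) + 1) * (j + 1)))]
    refine sum_congr rfl fun j _ => ?_
    simp [c, i.isLt, j.isLt]
  refine hsum.trans_le (sum_range_sum_range_div_le hΛ c hc (by positivity) (by positivity) ?_ ?_ hs)
  · intro i hi k e he hem
    refine (sum_congr rfl fun t _ => ?_).trans_le <|
      sum_abs_rectDiff_div_le_LamV1 (f := flip f) hΛ h₂ (hI.fst_mem ⟨i, hi⟩) (hI.snd_mem ⟨i, hi⟩)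
      (hJ.comp_injective (e := fun t => ⟨e t, hem t⟩) fun s t hst => he (congrArg Fin.val hst))
    simp [c, hi, hem t, rectDiff_flip]
  · intro j hj k e hen he
    refine (sum_congr rfl fun t _ => ?_).trans_le <|
      sum_abs_rectDiff_div_le_LamV1 hΛ h₁ (hJ.fst_mem ⟨j, hj⟩) (hJ.snd_mem ⟨j, hj⟩)
      (hI.comp_injective (e := fun t => ⟨e t, he t⟩) fun s t hst => hen (congrArg Fin.val hst))
    simp [c, hj, he t]

end Variation

theorem stmt0_general (γ : ℕ → ℝ)
    (hγ : ∀ n, 1 ≤ n → 0 < γ (n + 1) ∧ γ (n + 1) ≤ γ n)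
    (hsum : Summable fun n : ℕ => γ (n + 1) / ((n : ℝ) + 1))
    (f : ℝ → ℝ → ℝ)
    (hPBV : LamV1 (fun n => (n : ℝ) * γ n) f + LamV2 (fun n => (n : ℝ) * γ n) f ≠ ⊤) :
    HarmonicV f ≠ ⊤ := by
  have hpos : ∀ n, 0 < γ (n + 1)
    | 0 => (hγ 1 le_rfl).1.trans_le (hγ 1 le_rfl).2
    | n + 1 => (hγ (n + 1) n.succ_pos).1
  have hanti : AntitoneOn γ (Set.Ici 1) := antitoneOn_nat_Ici_of_succ_le fun n hn => (hγ n hn).2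
  have hΛ := natCast_mul_gamma_succ_pos hpos
  have hnat : ∀ k, 0 < (fun n : ℕ => (n : ℝ)) (k + 1) := fun k => by positivity
  have hcmp : ∀ k, (fun n : ℕ => (n : ℝ) * γ n) (k + 1) ≤ γ 1 * (fun n : ℕ => (n : ℝ)) (k + 1) :=
    fun k => by
      rw [mul_comm (γ 1)]
      exact mul_le_mul_of_nonneg_left (hanti (Set.mem_Ici.2 le_rfl)
        (Set.mem_Ici.2 (Nat.le_add_left 1 k)) (Nat.le_add_left 1 k)) (k + 1 : ℕ).cast_nonneg
  obtain ⟨h₁, h₂⟩ := ENNReal.add_ne_top.1 hPBV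
  refine ENNReal.add_ne_top.2 ⟨ENNReal.add_ne_top.2 ⟨?_, ?_⟩, LamV12_natCast_ne_top hΛ
    (summable_logDivSucc_div_invPartialSum hpos hanti hsum) h₁ h₂⟩
  · exact ne_top_of_le_ne_top (ENNReal.mul_ne_top ENNReal.ofReal_ne_top h₁)
      (LamV1_le_ofReal_mul hΛ hnat hcmp)
  · rw [LamV2_eq_LamV1_flip] at h₂ ⊢
    exact ne_top_of_le_ne_top (ENNReal.mul_ne_top ENNReal.ofReal_ne_top h₂)
      (LamV1_le_ofReal_mul hΛ hnat hcmp)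

/-- Goginava–Sahakian, Theorem 1, part 1:
if `λ_n = n·γ_n` with `γ_n ≥ γ_{n+1} > 0` and `Σ γ_n/n < ∞`, then `PΛBV ⊆ HBV`. -/
theorem stmt0 (γ : ℕ → ℝ)
    (hγ : ∀ n, 1 ≤ n → 0 < γ (n + 1) ∧ γ (n + 1) ≤ γ n)
    (hsum : Summable fun n : ℕ => γ (n + 1) / ((n : ℝ) + 1))
    (f : ℝ → ℝ → ℝ) (hper : Periodic2 f)
    (hPBV : LamV1 (fun n => (n : ℝ) * γ n) f + LamV2 (fun n => (n : ℝ) * γ n) f ≠ ⊤) :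
    HarmonicV f ≠ ⊤ :=
  stmt0_general γ hγ hsum f hPBV
end

section
/- Let Λ = {λ_n} be an increasing sequence of positive numbers with λ_n → ∞. If limsup_{n→∞} (Σ_{k=1}^{n²} 1/λ_k) / (Σ_{k=1}^{n} 1/λ_k) = +∞, then Λ#BV \ Λ*BV ≠ ∅, i.e. there exists a 2π-periodic (in each variable) function f : ℝ² → ℝ with f ∈ Λ#BV but f ∉ Λ*BV. -/
open scoped ENNReal BigOperators
open Filter Set

/-!
Choose `n_j` with `∑_{k ≤ n_j²} 1/λ_k > 4^j ∑_{k ≤ n_j} 1/λ_k`, let `S_j` be a union of `n_j`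
disjoint closed intervals in the dyadic block `(π/2^j, π/2^(j-1))`, and put
`f = ∑_j a_j 𝟙_{S_j × S_j}` with `a_j = (2^j ∑_{k ≤ n_j} 1/λ_k)⁻¹`.

Then `|f(b,y) - f(a,y)| ≤ ∑_j a_j |𝟙_{S_j}(b) - 𝟙_{S_j}(a)|` whatever `y` is. Each of the `2 n_j`
endpoints of `S_j` lies in at most two of a family of nonoverlapping intervals, so at most
`4 n_j` of them see a jump of `𝟙_{S_j}`. As `1/λ_k` decreases, block `j` therefore contributes at
most `a_j ∑_{k ≤ 4 n_j} 1/λ_k ≤ 4 a_j ∑_{k ≤ n_j} 1/λ_k = 4/2^j` to `Λ#V₁(f)`, which is `≤ 8`.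
On the other hand, pairing the left end of each interval of `S_j` with a point of the gap after
it gives `n_j²` nonoverlapping rectangles `A` with `f(A) = a_j`, so
`Λ*V(f) ≥ a_j ∑_{k ≤ n_j²} 1/λ_k > 2^j` for every `j`.
-/

open scoped Finset

open Finset in
theorem Antitone.sum_le_sum_range_card {M : Type*} [AddCommMonoid M] [PartialOrder M]
    [IsOrderedAddMonoid M] {w : ℕ → M} (hw : Antitone w) (T : Finset ℕ) :
    ∑ i ∈ T, w i ≤ ∑ k ∈ range #T, w k := by
  induction T using Finset.induction_on_max with
  | empty => simp
  | insert a s has ih =>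
    have ha : a ∉ s := fun h => lt_irrefl a (has a h)
    have hcard : #s ≤ a := by
      simpa using Finset.card_le_card (fun x hx => mem_range.2 (has x hx) : s ⊆ range a)
    rw [sum_insert ha, card_insert_of_notMem ha, sum_range_succ, add_comm]
    exact add_le_add ih (hw hcard)

open Finset in
theorem Antitone.sum_range_mul_le {M : Type*} [AddCommMonoid M] [PartialOrder M]
    [IsOrderedAddMonoid M] {w : ℕ → M} (hw : Antitone w) (c n : ℕ) :
    ∑ k ∈ range (c * n), w k ≤ c • ∑ k ∈ range n, w k := by
  induction c with
  | zero => simp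
  | succ c ih =>
    rw [add_mul, one_mul, sum_range_add, succ_nsmul]
    exact add_le_add ih (sum_le_sum fun k _ => hw (Nat.le_add_left k _))

lemma exists_endpoint_mem_Icc_of_not_iff {N : ℕ} {u v : ℕ → ℝ} {a b : ℝ} (hab : a ≤ b)
    (h : ¬(b ∈ ⋃ p < N, Icc (u p) (v p) ↔ a ∈ ⋃ p < N, Icc (u p) (v p))) :
    ∃ p < N, u p ∈ Icc a b ∨ v p ∈ Icc a b := by
  simp only [mem_iUnion₂, mem_Icc, exists_prop] at h
  by_cases hb : ∃ p < N, u p ≤ b ∧ b ≤ v p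
  · obtain ⟨p, hp, hub, hbv⟩ := hb
    refine ⟨p, hp, Or.inl ⟨?_, hub⟩⟩
    by_contra! hau
    exact h (iff_of_true ⟨p, hp, hub, hbv⟩ ⟨p, hp, hau.le, by linarith⟩)
  · obtain ⟨p, hp, hua, hav⟩ : ∃ p < N, u p ≤ a ∧ a ≤ v p := by
      by_contra ha
      exact h (iff_of_false hb ha)
    refine ⟨p, hp, Or.inr ⟨hav, ?_⟩⟩
    by_contra! hvb
    exact hb ⟨p, hp, by linarith, hvb.le⟩

lemma abs_indicator_one_sub_le_one (S : Set ℝ) (a b : ℝ) :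
    |S.indicator 1 b - S.indicator 1 a| ≤ (1 : ℝ) := by
  unfold Set.indicator
  split_ifs <;> norm_num

lemma abs_indicator_one_le_one (S : Set ℝ) (x : ℝ) : |S.indicator (1 : ℝ → ℝ) x| ≤ 1 := by
  unfold Set.indicator
  split_ifs <;> norm_num

namespace NonoverlapIcc

variable {n : ℕ} {I : Fin n → ℝ × ℝ}

lemma card_filter_mem_Icc_le_two (hI : NonoverlapIcc n I) (x : ℝ) :
    #{i | x ∈ Icc (I i).1 (I i).2} ≤ 2 := by
  by_contra! h
  obtain ⟨i, hi, j, hj, k, hk, hij, hik, hjk⟩ := Finset.two_lt_card.1 h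
  simp only [Finset.mem_filter, Finset.mem_univ, true_and, mem_Icc] at hi hj hk
  have := (hI.1 i).2.1; have := (hI.1 j).2.1; have := (hI.1 k).2.1
  rcases hI.2 i j hij with h1 | h1 <;> rcases hI.2 i k hik with h2 | h2 <;>
    rcases hI.2 j k hjk with h3 | h3 <;> linarith [hi.1, hi.2, hj.1, hj.2, hk.1, hk.2]

lemma card_filter_exists_mem_Icc_le (hI : NonoverlapIcc n I) (B : Finset ℝ) :
    #{i | ∃ x ∈ B, x ∈ Icc (I i).1 (I i).2} ≤ 2 * #B := by
  classical
  calc #{i | ∃ x ∈ B, x ∈ Icc (I i).1 (I i).2}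
      ≤ #(B.biUnion fun x => {i | x ∈ Icc (I i).1 (I i).2}) := by
        exact Finset.card_le_card fun i hi => by simpa using hi
    _ ≤ ∑ x ∈ B, #{i | x ∈ Icc (I i).1 (I i).2} := Finset.card_biUnion_le
    _ ≤ #B • 2 := Finset.sum_le_card_nsmul _ _ _ fun x _ => hI.card_filter_mem_Icc_le_two x
    _ = 2 * #B := by rw [smul_eq_mul, mul_comm]

lemma sum_abs_indicator_sub_mul_le (hI : NonoverlapIcc n I) {w : ℕ → ℝ} (hw : Antitone w)
    (hw0 : 0 ≤ w) (N : ℕ) (u v : ℕ → ℝ) :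
    ∑ i, |(⋃ p < N, Icc (u p) (v p)).indicator 1 (I i).2 -
        (⋃ p < N, Icc (u p) (v p)).indicator 1 (I i).1| * w i ≤
      4 * ∑ k ∈ Finset.range N, w k := by
  classical
  set S := ⋃ p < N, Icc (u p) (v p)
  set T : Finset (Fin n) := {i | ¬((I i).2 ∈ S ↔ (I i).1 ∈ S)}
  have hT : #T ≤ 4 * N := by
    let B : Finset ℝ := (Finset.range N).image u ∪ (Finset.range N).image v
    have hB : #B ≤ 2 * N :=
      calc #B ≤ #((Finset.range N).image u) + #((Finset.range N).image v) :=
            Finset.card_union_le _ _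
        _ ≤ N + N := by gcongr <;> exact Finset.card_image_le.trans (Finset.card_range N).le
        _ = 2 * N := (two_mul N).symm
    have hTB : T ⊆ ({i | ∃ x ∈ B, x ∈ Icc (I i).1 (I i).2} : Finset (Fin n)) := fun i hi => by
      simp only [T, Finset.mem_filter, Finset.mem_univ, true_and] at hi
      obtain ⟨p, hp, hu | hv⟩ := exists_endpoint_mem_Icc_of_not_iff (hI.1 i).2.1.le hi
      · exact Finset.mem_filter.2 ⟨Finset.mem_univ _, u p,
          Finset.mem_union_left _ (Finset.mem_image_of_mem u (Finset.mem_range.2 hp)), hu⟩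
      · exact Finset.mem_filter.2 ⟨Finset.mem_univ _, v p,
          Finset.mem_union_right _ (Finset.mem_image_of_mem v (Finset.mem_range.2 hp)), hv⟩
    have := (Finset.card_le_card hTB).trans (hI.card_filter_exists_mem_Icc_le B)
    omega
  calc ∑ i, |S.indicator 1 (I i).2 - S.indicator 1 (I i).1| * w i
      = ∑ i ∈ T, |S.indicator 1 (I i).2 - S.indicator 1 (I i).1| * w i := by
        refine (Finset.sum_filter_of_ne fun i _ hne => ?_).symm
        intro hiff
        simp [Set.indicator, hiff] at hne
    _ ≤ ∑ i ∈ T, w i := Finset.sum_le_sum fun i _ =>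
        mul_le_of_le_one_left (hw0 i) (abs_indicator_one_sub_le_one S _ _)
    _ = ∑ k ∈ T.map Fin.valEmbedding, w k := (Finset.sum_map T Fin.valEmbedding w).symm
    _ ≤ ∑ k ∈ Finset.range #T, w k := by
        simpa only [Finset.card_map] using hw.sum_le_sum_range_card (T.map Fin.valEmbedding)
    _ ≤ ∑ k ∈ Finset.range (4 * N), w k :=
        Finset.sum_le_sum_of_subset_of_nonneg (Finset.range_subset_range.2 hT) fun k _ _ => hw0 k
    _ ≤ 4 * ∑ k ∈ Finset.range N, w k := by simpa using hw.sum_range_mul_le 4 N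

end NonoverlapIcc

lemma indicator_toIcoMod_two_pi {S : Set ℝ} (hS : S ⊆ Ioo 0 (2 * Real.pi)) {x : ℝ}
    (hx : x ∈ Icc 0 (2 * Real.pi)) :
    S.indicator (1 : ℝ → ℝ) (toIcoMod Real.two_pi_pos 0 x) = S.indicator 1 x := by
  rcases hx.2.lt_or_eq with hlt | rfl
  · rw [(toIcoMod_eq_self _).2 ⟨hx.1, by simpa using hlt⟩]
  · have h0 : toIcoMod Real.two_pi_pos 0 (2 * Real.pi) = 0 := by
      simpa using toIcoMod_add_right Real.two_pi_pos 0 0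
    rw [h0, Set.indicator_of_notMem fun h => (hS h).1.false,
      Set.indicator_of_notMem fun h => (hS h).2.false]

/-- `∑ⱼ aⱼ 𝟙_{Sⱼ × Sⱼ}` on `[0, 2π)²`, extended `2π`-periodically in each variable. -/
noncomputable def diagIndicatorSum (S : ℕ → Set ℝ) (a : ℕ → ℝ) (x y : ℝ) : ℝ :=
  ∑' j, a j * (S j).indicator 1 (toIcoMod Real.two_pi_pos 0 x) *
    (S j).indicator 1 (toIcoMod Real.two_pi_pos 0 y)

namespace diagIndicatorSum

open Function

variable {S : ℕ → Set ℝ} {a : ℕ → ℝ}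

lemma periodic2 (S : ℕ → Set ℝ) (a : ℕ → ℝ) : Periodic2 (diagIndicatorSum S a) := fun x y => by
  simp only [diagIndicatorSum, toIcoMod_add_right, and_self]

lemma comm (x y : ℝ) : diagIndicatorSum S a x y = diagIndicatorSum S a y x :=
  tsum_congr fun j => by ring

lemma abs_sub_le (ha0 : 0 ≤ a) (ha : Summable a) (x x' y : ℝ) :
    |diagIndicatorSum S a x' y - diagIndicatorSum S a x y| ≤
      ∑' j, a j * |(S j).indicator 1 (toIcoMod Real.two_pi_pos 0 x') -
        (S j).indicator 1 (toIcoMod Real.two_pi_pos 0 x)| := by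
  set ι : ℕ → ℝ → ℝ := fun j z => (S j).indicator 1 (toIcoMod Real.two_pi_pos 0 z)
  have hdom : ∀ {g : ℕ → ℝ}, (∀ j, |g j| ≤ a j) → Summable g := fun h => ha.of_norm_bounded h
  have hterm : ∀ j z, |a j * ι j z * ι j y| ≤ a j := fun j z => by
    rw [abs_mul, abs_mul, abs_of_nonneg (ha0 j), mul_assoc]
    exact mul_le_of_le_one_right (ha0 j) (mul_le_one₀ (abs_indicator_one_le_one _ _)
      (abs_nonneg _) (abs_indicator_one_le_one _ _))
  have hpoint : ∀ j, |a j * ι j x' * ι j y - a j * ι j x * ι j y| ≤ a j * |ι j x' - ι j x| :=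
    fun j => by
      rw [← sub_mul, ← mul_sub, abs_mul, abs_mul, abs_of_nonneg (ha0 j)]
      exact mul_le_of_le_one_right (mul_nonneg (ha0 j) (abs_nonneg _))
        (abs_indicator_one_le_one _ _)
  have hdiff : ∀ j, a j * |ι j x' - ι j x| ≤ a j := fun j =>
    mul_le_of_le_one_right (ha0 j) (abs_indicator_one_sub_le_one _ _ _)
  have hdiff_sum : Summable fun j => a j * |ι j x' - ι j x| := hdom fun j => by
    rw [abs_of_nonneg (mul_nonneg (ha0 j) (abs_nonneg _))]
    exact hdiff j
  have hpoint_sum : Summable fun j => |a j * ι j x' * ι j y - a j * ι j x * ι j y| :=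
    hdom fun j => (abs_abs _).trans_le ((hpoint j).trans (hdiff j))
  calc |diagIndicatorSum S a x' y - diagIndicatorSum S a x y|
      = |∑' j, (a j * ι j x' * ι j y - a j * ι j x * ι j y)| := by
        rw [(hdom (hterm · x')).tsum_sub (hdom (hterm · x))]; rfl
    _ ≤ ∑' j, |a j * ι j x' * ι j y - a j * ι j x * ι j y| := by
        simp only [← Real.norm_eq_abs]
        exact norm_tsum_le_tsum_norm (by simpa only [Real.norm_eq_abs] using hpoint_sum)
    _ ≤ ∑' j, a j * |ι j x' - ι j x| := hpoint_sum.tsum_le_tsum hpoint hdiff_sum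

lemma sum_abs_sub_mul_le (ha0 : 0 ≤ a) (ha : Summable a) {n : ℕ} (I : Fin n → ℝ × ℝ)
    (y : Fin n → ℝ) {w : ℕ → ℝ} (hw0 : 0 ≤ w) :
    ∑ i, |diagIndicatorSum S a (I i).2 (y i) - diagIndicatorSum S a (I i).1 (y i)| * w i ≤
      ∑' j, a j * ∑ i, |(S j).indicator 1 (toIcoMod Real.two_pi_pos 0 (I i).2) -
        (S j).indicator 1 (toIcoMod Real.two_pi_pos 0 (I i).1)| * w i := by
  set ι : ℕ → ℝ → ℝ := fun j z => (S j).indicator 1 (toIcoMod Real.two_pi_pos 0 z)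
  have hsum : ∀ i : Fin n, Summable fun j => a j * |ι j (I i).2 - ι j (I i).1| * w i :=
    fun i => (ha.mul_right (w i)).of_nonneg_of_le
      (fun j => mul_nonneg (mul_nonneg (ha0 j) (abs_nonneg _)) (hw0 i))
      fun j => mul_le_mul_of_nonneg_right
        (mul_le_of_le_one_right (ha0 j) (abs_indicator_one_sub_le_one _ _ _)) (hw0 i)
  calc ∑ i, |diagIndicatorSum S a (I i).2 (y i) - diagIndicatorSum S a (I i).1 (y i)| * w i
      ≤ ∑ i, ∑' j, a j * |ι j (I i).2 - ι j (I i).1| * w i := by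
        refine Finset.sum_le_sum fun i _ => ?_
        rw [tsum_mul_right]
        exact mul_le_mul_of_nonneg_right (abs_sub_le ha0 ha _ _ _) (hw0 i)
    _ = ∑' j, a j * ∑ i, |ι j (I i).2 - ι j (I i).1| * w i := by
        rw [← Summable.tsum_finsetSum fun i _ => hsum i]
        simp only [Finset.mul_sum, mul_assoc]

lemma eq_of_mem (hS : Pairwise (Disjoint on S)) {j : ℕ} {x y : ℝ} (hx : x ∈ S j)
    (hy : y ∈ S j) (hx' : x ∈ Ico 0 (2 * Real.pi)) (hy' : y ∈ Ico 0 (2 * Real.pi)) :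
    diagIndicatorSum S a x y = a j := by
  rw [diagIndicatorSum, tsum_eq_single j fun l hl => ?_]
  · rw [(toIcoMod_eq_self _).2 (by simpa using hx'), (toIcoMod_eq_self _).2 (by simpa using hy'),
      Set.indicator_of_mem hx, Set.indicator_of_mem hy]
    simp
  · rw [(toIcoMod_eq_self _).2 (by simpa using hx'),
      Set.indicator_of_notMem fun h => (hS hl).notMem_of_mem_right hx h]
    simp

lemma eq_zero_of_forall_notMem {x : ℝ} (hx : ∀ j, x ∉ S j) (hx' : x ∈ Ico 0 (2 * Real.pi))
    (y : ℝ) : diagIndicatorSum S a x y = 0 := by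
  rw [diagIndicatorSum, (toIcoMod_eq_self _).2 (by simpa using hx')]
  simp [Set.indicator_of_notMem (hx _)]

lemma rect_eq (hS : Pairwise (Disjoint on S)) {j : ℕ} {x x' y y' : ℝ} (hx : x ∈ S j)
    (hy : y ∈ S j) (hx' : ∀ l, x' ∉ S l) (hy' : ∀ l, y' ∉ S l)
    (hxT : x ∈ Ico 0 (2 * Real.pi)) (hyT : y ∈ Ico 0 (2 * Real.pi))
    (hx'T : x' ∈ Ico 0 (2 * Real.pi)) (hy'T : y' ∈ Ico 0 (2 * Real.pi)) :
    diagIndicatorSum S a x y - diagIndicatorSum S a x y' - diagIndicatorSum S a x' y +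
      diagIndicatorSum S a x' y' = a j := by
  rw [eq_of_mem hS hx hy hxT hyT, comm x y', eq_zero_of_forall_notMem hy' hy'T,
    eq_zero_of_forall_notMem hx' hx'T, eq_zero_of_forall_notMem hx' hx'T]
  ring

end diagIndicatorSum

noncomputable def gridPt (j N k : ℕ) : ℝ := Real.pi / 2 ^ j * (1 + k / (4 * N + 4))

def blockSet (j N : ℕ) : Set ℝ := ⋃ p < N, Icc (gridPt j N (4 * p + 1)) (gridPt j N (4 * p + 2))

lemma gridPt_strictMono (j N : ℕ) : StrictMono (gridPt j N) := fun k k' h => by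
  unfold gridPt
  have : (0 : ℝ) < Real.pi / 2 ^ j := by positivity
  gcongr

lemma gridPt_mem_Ioo {j N k : ℕ} (hk0 : 0 < k) (hk : k < 4 * N + 4) :
    gridPt j N k ∈ Ioo (Real.pi / 2 ^ j) (2 * (Real.pi / 2 ^ j)) := by
  have h0 : gridPt j N 0 = Real.pi / 2 ^ j := by simp [gridPt]
  have h1 : gridPt j N (4 * N + 4) = 2 * (Real.pi / 2 ^ j) := by
    simp only [gridPt]
    rw [Nat.cast_add, Nat.cast_mul, Nat.cast_ofNat, div_self (by positivity)]
    ring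
  rw [← h1, ← h0]
  exact ⟨gridPt_strictMono j N hk0, gridPt_strictMono j N hk⟩

lemma gridPt_mem_blockSet_iff {j N k : ℕ} :
    gridPt j N k ∈ blockSet j N ↔ ∃ p < N, 4 * p + 1 ≤ k ∧ k ≤ 4 * p + 2 := by
  simp only [blockSet, mem_iUnion₂, mem_Icc, exists_prop, (gridPt_strictMono j N).le_iff_le]

lemma blockSet_subset (j N : ℕ) :
    blockSet j N ⊆ Ioo (Real.pi / 2 ^ j) (2 * (Real.pi / 2 ^ j)) := by
  intro x hx
  simp only [blockSet, mem_iUnion₂, mem_Icc, exists_prop] at hx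
  obtain ⟨p, hp, h1, h2⟩ := hx
  exact ⟨(gridPt_mem_Ioo (by omega) (by omega)).1.trans_le h1,
    h2.trans_lt (gridPt_mem_Ioo (k := 4 * p + 2) (by omega) (by omega)).2⟩

lemma dyadic_Ioo_subset (j : ℕ) :
    Ioo (Real.pi / 2 ^ j) (2 * (Real.pi / 2 ^ j)) ⊆ Ioo 0 (2 * Real.pi) := by
  have : Real.pi / 2 ^ j ≤ Real.pi := div_le_self Real.pi_pos.le (one_le_pow₀ (by norm_num))
  exact Ioo_subset_Ioo (by positivity) (by linarith)

lemma dyadic_Ioo_disjoint {j l : ℕ} (h : j ≠ l) :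
    Disjoint (Ioo (Real.pi / 2 ^ j) (2 * (Real.pi / 2 ^ j)))
      (Ioo (Real.pi / 2 ^ l) (2 * (Real.pi / 2 ^ l))) := by
  wlog hjl : j < l generalizing j l
  · exact (this h.symm (by omega)).symm
  have hpow : (2 : ℝ) ^ (j + 1) ≤ 2 ^ l := pow_le_pow_right₀ (by norm_num) hjl
  have : 2 * (Real.pi / 2 ^ l) ≤ Real.pi / 2 ^ j := by
    rw [mul_div_assoc', div_le_div_iff₀ (by positivity) (by positivity), pow_succ] at *
    nlinarith [Real.pi_pos]
  exact Set.disjoint_left.2 fun x hx hx' => by linarith [hx.1, hx'.2]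

lemma Ioo_gridPt_disjoint (j N : ℕ) {p q : ℕ} (h : p ≠ q) :
    Disjoint (Ioo (gridPt j N (4 * p + 1)) (gridPt j N (4 * p + 3)))
      (Ioo (gridPt j N (4 * q + 1)) (gridPt j N (4 * q + 3))) := by
  rw [Set.Ioo_disjoint_Ioo, ← (gridPt_strictMono j N).monotone.map_min,
    ← (gridPt_strictMono j N).monotone.map_max, (gridPt_strictMono j N).le_iff_le]
  omega

open Function in
lemma pairwise_disjoint_blockSet (n : ℕ → ℕ) :
    Pairwise (Disjoint on fun j => blockSet j (n j)) := fun _ _ h =>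
  (dyadic_Ioo_disjoint h).mono (blockSet_subset _ _) (blockSet_subset _ _)

lemma blockSet_subset_Ioo_two_pi (j N : ℕ) : blockSet j N ⊆ Ioo 0 (2 * Real.pi) :=
  (blockSet_subset j N).trans (dyadic_Ioo_subset j)

lemma gridPt_mem_Ico_two_pi {j N k : ℕ} (hk0 : 0 < k) (hk : k < 4 * N + 4) :
    gridPt j N k ∈ Ico 0 (2 * Real.pi) :=
  Ioo_subset_Ico_self (dyadic_Ioo_subset j (gridPt_mem_Ioo hk0 hk))

lemma gridPt_notMem_blockSet (n : ℕ → ℕ) {j p : ℕ} (hp : p < n j) (l : ℕ) :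
    gridPt j (n j) (4 * p + 3) ∉ blockSet l (n l) := by
  rcases eq_or_ne l j with rfl | hlj
  · rw [gridPt_mem_blockSet_iff]
    omega
  · exact fun h => Set.disjoint_left.1 (dyadic_Ioo_disjoint hlj) (blockSet_subset l _ h)
      (gridPt_mem_Ioo (by omega) (by omega))

/-- `k ↦ (k / N, k % N)` enumerates the pairs `(p, q)`, `p, q < N`; each side runs from the left
end of the `p`-th (resp. `q`-th) interval of `blockSet j N` into the gap after it. -/
noncomputable def gridRect (j N k : ℕ) : (ℝ × ℝ) × (ℝ × ℝ) :=
  ((gridPt j N (4 * (k / N) + 1), gridPt j N (4 * (k / N) + 3)),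
    (gridPt j N (4 * (k % N) + 1), gridPt j N (4 * (k % N) + 3)))

lemma Nat.div_lt_of_lt_sq {k N : ℕ} (hk : k < N ^ 2) : k / N < N :=
  Nat.div_lt_of_lt_mul (by rwa [sq] at hk)

lemma Nat.mod_lt_of_lt_sq {k N : ℕ} (hk : k < N ^ 2) : k % N < N :=
  Nat.mod_lt _ (Nat.pos_of_ne_zero (by rintro rfl; simp at hk))

lemma nonoverlapRect_gridRect (j N : ℕ) : NonoverlapRect (N ^ 2) fun k => gridRect j N k := by
  have hside : ∀ {p}, p < N → 0 ≤ gridPt j N (4 * p + 1) ∧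
      gridPt j N (4 * p + 1) < gridPt j N (4 * p + 3) ∧ gridPt j N (4 * p + 3) ≤ 2 * Real.pi :=
    fun hp => ⟨(gridPt_mem_Ico_two_pi (by omega) (by omega)).1, gridPt_strictMono j N (by omega),
      (gridPt_mem_Ico_two_pi (k := 4 * _ + 3) (by omega) (by omega)).2.le⟩
  refine ⟨fun k => ?_, fun k l hkl => Set.disjoint_prod.2 ?_⟩
  · obtain ⟨a1, a2, a3⟩ := hside (Nat.div_lt_of_lt_sq k.2)
    obtain ⟨b1, b2, b3⟩ := hside (Nat.mod_lt_of_lt_sq k.2)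
    exact ⟨a1, a2, a3, b1, b2, b3⟩
  · have : (k : ℕ) / N ≠ l / N ∨ (k : ℕ) % N ≠ l % N := by
      by_contra! h
      exact hkl (Fin.ext (by rw [← Nat.div_add_mod k N, ← Nat.div_add_mod l N, h.1, h.2]))
    exact this.imp (Ioo_gridPt_disjoint j N) (Ioo_gridPt_disjoint j N)

section Construction

variable (Λ : ℕ → ℝ) (n : ℕ → ℕ)

noncomputable def invSum (N : ℕ) : ℝ := ∑ k ∈ Finset.range N, 1 / Λ (k + 1)

noncomputable def blockCoeff (j : ℕ) : ℝ := (2 ^ j * invSum Λ (n j))⁻¹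

noncomputable def blockFun : ℝ → ℝ → ℝ :=
  diagIndicatorSum (fun j => blockSet j (n j)) (blockCoeff Λ n)

variable {Λ n}
variable (hpos : ∀ k, 1 ≤ k → 0 < Λ k) (hmono : ∀ k, 1 ≤ k → Λ k ≤ Λ (k + 1))

include hpos in
lemma one_div_shift_nonneg : 0 ≤ fun k => 1 / Λ (k + 1) :=
  fun k => (one_div_pos.2 (hpos _ (Nat.le_add_left 1 k))).le

include hpos hmono in
lemma antitone_one_div_shift : Antitone fun k => 1 / Λ (k + 1) :=
  antitone_nat_of_succ_le fun k =>
    one_div_le_one_div_of_le (hpos _ (Nat.le_add_left 1 k)) (hmono _ (Nat.le_add_left 1 k))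

include hpos in
lemma inv_le_invSum {N : ℕ} (hN : 0 < N) : (Λ 1)⁻¹ ≤ invSum Λ N := by
  simpa [invSum] using Finset.single_le_sum (fun k _ => one_div_shift_nonneg hpos k)
    (Finset.mem_range.2 hN)

include hpos in
lemma invSum_pos {N : ℕ} (hN : 0 < N) : 0 < invSum Λ N :=
  (inv_pos.2 (hpos 1 le_rfl)).trans_le (inv_le_invSum hpos hN)

lemma blockCoeff_eq (j : ℕ) : blockCoeff Λ n j = (1 / 2) ^ j * (invSum Λ (n j))⁻¹ := by
  rw [blockCoeff, mul_inv, one_div_pow, one_div]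

include hpos in
lemma blockCoeff_nonneg (hn : ∀ j, 0 < n j) : 0 ≤ blockCoeff Λ n := fun j => by
  have := invSum_pos hpos (hn j)
  rw [blockCoeff_eq]
  positivity

include hpos in
lemma summable_blockCoeff (hn : ∀ j, 0 < n j) : Summable (blockCoeff Λ n) := by
  refine (summable_geometric_two.mul_right (Λ 1)).of_nonneg_of_le (blockCoeff_nonneg hpos hn)
    fun j => ?_
  rw [blockCoeff_eq]
  exact mul_le_mul_of_nonneg_left (inv_le_of_inv_le₀ (hpos 1 le_rfl) (inv_le_invSum hpos (hn j)))
    (by positivity)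

include hpos in
lemma blockCoeff_mul_invSum (hn : ∀ j, 0 < n j) (j : ℕ) :
    blockCoeff Λ n j * invSum Λ (n j) = (1 / 2) ^ j := by
  rw [blockCoeff_eq, mul_assoc, inv_mul_cancel₀ (invSum_pos hpos (hn j)).ne', mul_one]

include hpos hmono in
lemma sum_abs_blockFun_sub_div_le (hn : ∀ j, 0 < n j) {m : ℕ} {I : Fin m → ℝ × ℝ}
    (hI : NonoverlapIcc m I) (y : Fin m → ℝ) :
    ∑ i, |blockFun Λ n (I i).2 (y i) - blockFun Λ n (I i).1 (y i)| / Λ (i + 1) ≤ 8 := by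
  have hw0 := one_div_shift_nonneg hpos
  have hIcc : ∀ i, (I i).1 ∈ Icc 0 (2 * Real.pi) ∧ (I i).2 ∈ Icc 0 (2 * Real.pi) := fun i => by
    obtain ⟨h1, h2, h3⟩ := hI.1 i
    exact ⟨⟨h1, by linarith⟩, ⟨by linarith, h3⟩⟩
  have hblock : ∀ j, blockCoeff Λ n j * ∑ i,
      |(blockSet j (n j)).indicator 1 (toIcoMod Real.two_pi_pos 0 (I i).2) -
        (blockSet j (n j)).indicator 1 (toIcoMod Real.two_pi_pos 0 (I i).1)| * (1 / Λ (i + 1))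
      ≤ 4 * (1 / 2) ^ j := fun j => by
    have hS := blockSet_subset_Ioo_two_pi j (n j)
    simp only [indicator_toIcoMod_two_pi hS (hIcc _).1, indicator_toIcoMod_two_pi hS (hIcc _).2]
    calc _ ≤ blockCoeff Λ n j * (4 * invSum Λ (n j)) :=
          mul_le_mul_of_nonneg_left (hI.sum_abs_indicator_sub_mul_le
            (antitone_one_div_shift hpos hmono) hw0 (n j) _ _) (blockCoeff_nonneg hpos hn j)
      _ = 4 * (1 / 2) ^ j := by rw [← blockCoeff_mul_invSum hpos hn j]; ring
  calc ∑ i, |blockFun Λ n (I i).2 (y i) - blockFun Λ n (I i).1 (y i)| / Λ (i + 1)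
      = ∑ i, |blockFun Λ n (I i).2 (y i) - blockFun Λ n (I i).1 (y i)| * (1 / Λ (i + 1)) := by
        simp only [mul_one_div]
    _ ≤ _ := diagIndicatorSum.sum_abs_sub_mul_le (blockCoeff_nonneg hpos hn)
        (summable_blockCoeff hpos hn) I y hw0
    _ ≤ ∑' j : ℕ, 4 * (1 / 2 : ℝ) ^ j :=
        Summable.tsum_le_tsum hblock ((summable_geometric_two.mul_left 4).of_nonneg_of_le
          (fun j => mul_nonneg (blockCoeff_nonneg hpos hn j) (Finset.sum_nonneg fun i _ =>
            mul_nonneg (abs_nonneg _) (hw0 _))) hblock) (summable_geometric_two.mul_left 4)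
    _ = 8 := by rw [tsum_mul_left, tsum_geometric_two]; norm_num

include hpos hmono in
lemma lamSharpV1_blockFun_le (hn : ∀ j, 0 < n j) :
    LamSharpV1 Λ (blockFun Λ n) ≤ ENNReal.ofReal 8 :=
  iSup_le fun _ => iSup_le fun _ => iSup_le fun y => iSup_le fun hI => iSup_le fun _ =>
    ENNReal.ofReal_le_ofReal (sum_abs_blockFun_sub_div_le hpos hmono hn hI y)

include hpos hmono in
lemma lamSharpV2_blockFun_le (hn : ∀ j, 0 < n j) :
    LamSharpV2 Λ (blockFun Λ n) ≤ ENNReal.ofReal 8 :=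
  iSup_le fun _ => iSup_le fun _ => iSup_le fun x => iSup_le fun hJ => iSup_le fun _ => by
    simp only [blockFun, diagIndicatorSum.comm (x _)]
    exact ENNReal.ofReal_le_ofReal (sum_abs_blockFun_sub_div_le hpos hmono hn hJ x)

lemma blockFun_gridRect (j : ℕ) {k : ℕ} (hk : k < n j ^ 2) :
    blockFun Λ n (gridRect j (n j) k).1.1 (gridRect j (n j) k).2.1 -
      blockFun Λ n (gridRect j (n j) k).1.1 (gridRect j (n j) k).2.2 -
      blockFun Λ n (gridRect j (n j) k).1.2 (gridRect j (n j) k).2.1 +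
      blockFun Λ n (gridRect j (n j) k).1.2 (gridRect j (n j) k).2.2 = blockCoeff Λ n j := by
  have hp := Nat.div_lt_of_lt_sq hk
  have hq := Nat.mod_lt_of_lt_sq hk
  have hmem : ∀ {p}, p < n j → gridPt j (n j) (4 * p + 1) ∈ blockSet j (n j) := fun hp =>
    gridPt_mem_blockSet_iff.2 ⟨_, hp, le_rfl, by omega⟩
  exact diagIndicatorSum.rect_eq (pairwise_disjoint_blockSet n) (hmem hp) (hmem hq)
    (gridPt_notMem_blockSet n hp) (gridPt_notMem_blockSet n hq)
    (gridPt_mem_Ico_two_pi (by omega) (by omega)) (gridPt_mem_Ico_two_pi (by omega) (by omega))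
    (gridPt_mem_Ico_two_pi (by omega) (by omega)) (gridPt_mem_Ico_two_pi (by omega) (by omega))

include hpos in
lemma ofReal_le_lamStarV_blockFun (hn : ∀ j, 0 < n j) (j : ℕ) :
    ENNReal.ofReal (blockCoeff Λ n j * invSum Λ (n j ^ 2)) ≤ LamStarV Λ (blockFun Λ n) := by
  have hsum : ∑ k : Fin (n j ^ 2),
      |blockFun Λ n (gridRect j (n j) k).1.1 (gridRect j (n j) k).2.1 -
        blockFun Λ n (gridRect j (n j) k).1.1 (gridRect j (n j) k).2.2 -
        blockFun Λ n (gridRect j (n j) k).1.2 (gridRect j (n j) k).2.1 +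
        blockFun Λ n (gridRect j (n j) k).1.2 (gridRect j (n j) k).2.2| / Λ (k + 1) =
      blockCoeff Λ n j * invSum Λ (n j ^ 2) := by
    simp only [blockFun_gridRect j (Fin.is_lt _), abs_of_nonneg (blockCoeff_nonneg hpos hn j),
      div_eq_mul_one_div (blockCoeff Λ n j), ← Finset.mul_sum, invSum]
    rw [Fin.sum_univ_eq_sum_range (fun k => 1 / Λ (k + 1))]
  rw [← hsum]
  exact le_iSup_of_le (n j ^ 2) (le_iSup_of_le (fun k => gridRect j (n j) k)
    (le_iSup_of_le (nonoverlapRect_gridRect j (n j)) le_rfl))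

lemma two_pow_lt_blockCoeff_mul_invSum {j : ℕ}
    (h : 4 ^ j < invSum Λ (n j ^ 2) / invSum Λ (n j)) :
    2 ^ j < blockCoeff Λ n j * invSum Λ (n j ^ 2) :=
  calc (2 : ℝ) ^ j = (1 / 2) ^ j * 4 ^ j := by rw [← mul_pow]; norm_num
    _ < (1 / 2) ^ j * (invSum Λ (n j ^ 2) / invSum Λ (n j)) :=
        mul_lt_mul_of_pos_left h (by positivity)
    _ = blockCoeff Λ n j * invSum Λ (n j ^ 2) := by rw [blockCoeff_eq, div_eq_mul_inv]; ring

include hpos hmono in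
lemma lamSharpV_blockFun_ne_top (hn : ∀ j, 0 < n j) :
    LamSharpV1 Λ (blockFun Λ n) + LamSharpV2 Λ (blockFun Λ n) ≠ ⊤ :=
  ne_top_of_le_ne_top (by simp : ENNReal.ofReal 8 + ENNReal.ofReal 8 ≠ ⊤)
    (add_le_add (lamSharpV1_blockFun_le hpos hmono hn) (lamSharpV2_blockFun_le hpos hmono hn))

include hpos in
lemma lamStarV_blockFun_eq_top (hn : ∀ j, 0 < n j)
    (hratio : ∀ j, 4 ^ j < invSum Λ (n j ^ 2) / invSum Λ (n j)) :
    LamStarV Λ (blockFun Λ n) = ⊤ := by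
  refine ENNReal.eq_top_of_forall_nnreal_le fun r => ?_
  obtain ⟨j, hj⟩ := pow_unbounded_of_one_lt (r : ℝ) (by norm_num : (1 : ℝ) < 2)
  refine le_trans ?_ (ofReal_le_lamStarV_blockFun hpos hn j)
  rw [← ENNReal.ofReal_coe_nnreal]
  exact ENNReal.ofReal_le_ofReal (hj.trans (two_pow_lt_blockCoeff_mul_invSum (hratio j))).le

end Construction

theorem stmt4_general (Λ : ℕ → ℝ)
    (hpos : ∀ n, 1 ≤ n → 0 < Λ n) (hmono : ∀ n, 1 ≤ n → Λ n ≤ Λ (n + 1))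
    (hlimsup : ∀ M : ℝ, ∃ᶠ n in atTop,
      M < (∑ k ∈ Finset.range (n ^ 2), 1 / Λ (k + 1)) /
          (∑ k ∈ Finset.range n, 1 / Λ (k + 1))) :
    ∃ f : ℝ → ℝ → ℝ, Periodic2 f ∧
      LamSharpV1 Λ f + LamSharpV2 Λ f ≠ ⊤ ∧
      LamV1 Λ f + LamV2 Λ f + LamStarV Λ f = ⊤ := by
  choose n hratio using fun j : ℕ => (hlimsup (4 ^ j)).exists
  have hn : ∀ j, 0 < n j := fun j => Nat.pos_of_ne_zero fun h => by
    have := hratio j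
    simp only [h, Finset.range_zero, Finset.sum_empty, div_zero] at this
    exact (pow_pos (by norm_num) j).not_gt this
  refine ⟨blockFun Λ n, diagIndicatorSum.periodic2 _ _, lamSharpV_blockFun_ne_top hpos hmono hn, ?_⟩
  simp [lamStarV_blockFun_eq_top hpos hn hratio]

/-- if `limsup (Σ_{k≤n²} 1/λ_k)/(Σ_{k≤n} 1/λ_k) = +∞`,
then `Λ#BV \ Λ*BV ≠ ∅`. -/
theorem stmt4 (Λ : ℕ → ℝ)
    (hpos : ∀ n, 1 ≤ n → 0 < Λ n) (hmono : ∀ n, 1 ≤ n → Λ n ≤ Λ (n + 1))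
    (htop : Tendsto Λ atTop atTop)
    (hlimsup : ∀ M : ℝ, ∃ᶠ n in atTop,
      M < (∑ k ∈ Finset.range (n ^ 2), 1 / Λ (k + 1)) /
          (∑ k ∈ Finset.range n, 1 / Λ (k + 1))) :
    ∃ f : ℝ → ℝ → ℝ, Periodic2 f ∧
      LamSharpV1 Λ f + LamSharpV2 Λ f ≠ ⊤ ∧
      LamV1 Λ f + LamV2 Λ f + LamStarV Λ f = ⊤ :=
  stmt4_general Λ hpos hmono hlimsup
end
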